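/- Let F be a non-meager filter on ω extending the Fréchet filter and define G = {A ⊆ ω × ω : for every n < ω, the vertical section {x : (n,x) ∈ A} belongs to F}. Then G is a non-meager subset of 2^(ω×ω). -/

import Mathlib

open Set

/-- A point of the Cantor space `α → Bool`, viewed as a subset of `α`
(the identification of `2^ω` with `𝒫(ω)` via characteristic functions). -/
def toSet {α : Type*} (x : α → Bool) : Set α := {a | x a = true}

/-- The copy of a family `F ⊆ 𝒫(α)` inside the Cantor space `α → Bool`. -/
def cantorCopy {α : Type*} (F : Set (Set α)) : Set (α → Bool) := toSet ⁻¹' F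

/-- `F` is a filter on `α`: contains the whole set, not `∅`, closed under
finite intersections and supersets. -/
def IsFilterOn {α : Type*} (F : Set (Set α)) : Prop :=
  Set.univ ∈ F ∧ ∅ ∉ F ∧ (∀ A B : Set α, A ∈ F → B ∈ F → A ∩ B ∈ F) ∧
    ∀ A B : Set α, A ∈ F → A ⊆ B → B ∈ F

/-- `F` extends the Fréchet filter: every cofinite set belongs to `F`. -/
def ExtendsFrechet {α : Type*} (F : Set (Set α)) : Prop :=
  ∀ A : Set α, Aᶜ.Finite → A ∈ F

/-- `F` is a P-filter: every countable subfamily has a pseudo-intersection in `F`. -/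
def IsPFilterOn {α : Type*} (F : Set (Set α)) : Prop :=
  ∀ X : ℕ → Set α, (∀ n, X n ∈ F) → ∃ Y ∈ F, ∀ n, (Y \ X n).Finite

/-- `F` is non-meager as a subset of the Cantor space `α → Bool`. -/
def NonMeagerFamily {α : Type*} (F : Set (Set α)) : Prop :=
  ¬ IsMeagre (cantorCopy F)

/-- `I` is an ideal on `α`: contains `∅`, not the whole set, closed under
finite unions and subsets. -/
def IsIdealOn {α : Type*} (I : Set (Set α)) : Prop :=
  ∅ ∈ I ∧ Set.univ ∉ I ∧ (∀ A B : Set α, A ∈ I → B ∈ I → A ∪ B ∈ I) ∧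
    ∀ A B : Set α, A ∈ I → B ⊆ A → B ∈ I

/-- `I` contains all finite sets. -/
def ContainsFinites {α : Type*} (I : Set (Set α)) : Prop :=
  ∀ A : Set α, A.Finite → A ∈ I

/-- `I` is a P-ideal: every countable subfamily has a member of `I`
almost containing each of them. -/
def IsPIdealOn {α : Type*} (I : Set (Set α)) : Prop :=
  ∀ X : ℕ → Set α, (∀ n, X n ∈ I) → ∃ Y ∈ I, ∀ n, (X n \ Y).Finite

/-- A topological space is countable dense homogeneous. -/
def CDH (X : Type*) [TopologicalSpace X] : Prop :=
  ∀ D E : Set X, D.Countable → Dense D → E.Countable → Dense E →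
    ∃ h : X ≃ₜ X, h '' D = E

/-- `D` is a (set-theoretic) subfamily of `F` that is dense in `F` with respect to
the subspace topology `F` inherits from the Cantor space. -/
def DenseIn {α : Type*} (D F : Set (Set α)) : Prop :=
  D ⊆ F ∧ cantorCopy F ⊆ closure (cantorCopy D)

/-!
A superset-closed family `H ⊆ 𝒫(α)` is meagre in `2^α` if and only if there are pairwise
disjoint finite sets `K k` such that every member of `H` meets all but finitely many of them
(Talagrand). For the converse direction it suffices that the `K k` are finite and that every
point eventually leaves them.

Apply the forward direction to `G`, which is superset-closed. For `X ∈ F` the set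
`{(n, b) | b ∈ X, n < b}` belongs to `G`, because its sections are cofinite parts of `X`. It meets
`K k` exactly when `X` meets `L k = {b | ∃ n < b, (n, b) ∈ K k}`. The sets `L k` are finite, and
a point `b` leaves them eventually because it has only finitely many companions `n < b`. Hence `F`
is meagre.
-/

open Filter Function

section Cylinders

variable {α β : Type*} [TopologicalSpace β]

lemma isOpen_setOf_eqOn [DiscreteTopology β] (z : α → β) (J : Finset α) :
    IsOpen {y : α → β | EqOn y z J} := by
  have : {y : α → β | EqOn y z J} = (J : Set α).pi fun a => {z a} := by
    ext y; simp [EqOn, Set.mem_pi]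
  rw [this]
  exact isOpen_set_pi J.finite_toSet fun a _ => isOpen_discrete _

lemma exists_finset_setOf_eqOn_subset {U : Set (α → β)} (hU : IsOpen U) {x : α → β}
    (hx : x ∈ U) : ∃ J : Finset α, {y | EqOn y x J} ⊆ U := by
  obtain ⟨J, u, hxu, huU⟩ := isOpen_pi_iff.mp hU x hx
  exact ⟨J, fun y hy => huU fun a ha => (hy ha) ▸ (hxu a ha).2⟩

end Cylinders

lemma IsMeagre.exists_monotone_isClosed_isNowhereDense {X : Type*} [TopologicalSpace X]
    [BaireSpace X] {s : Set X} (hs : IsMeagre s) :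
    ∃ C : ℕ → Set X, Monotone C ∧ (∀ n, IsClosed (C n)) ∧ (∀ n, IsNowhereDense (C n)) ∧
      s ⊆ ⋃ n, C n := by
  obtain ⟨t, hts, htδ, htd⟩ := mem_residual.mp hs
  obtain ⟨U, hU, rfl⟩ := htδ.eq_iInter_nat
  have hclosed (n : ℕ) : IsClosed (accumulate (fun i => (U i)ᶜ) n) :=
    (finite_Iic n).isClosed_biUnion fun i _ => (hU i).isClosed_compl
  refine ⟨accumulate fun i => (U i)ᶜ, monotone_accumulate, hclosed, fun n => ?_, fun x hx => ?_⟩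
  · refine (isClosed_isNowhereDense_iff_compl.mpr ⟨(hclosed n).isOpen_compl, ?_⟩).2
    refine htd.mono fun x hx => ?_
    simp only [accumulate, compl_iUnion, compl_compl, mem_iInter] at hx ⊢
    exact fun i _ => hx i
  · have : x ∉ ⋂ n, U n := fun h => hts h hx
    obtain ⟨n, hn⟩ := by simpa only [mem_iInter, not_forall] using this
    exact mem_iUnion.mpr ⟨n, mem_accumulate.mpr ⟨n, le_rfl, hn⟩⟩

section EventuallyMeets

variable {α : Type*}

def eventuallyMeets (K : ℕ → Set α) : Set (Set α) :=
  {A | ∀ᶠ k in atTop, (A ∩ K k).Nonempty}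

lemma isNowhereDense_of_forall_infinite {C : Set (α → Bool)} (hC : IsClosed C)
    (hinf : ∀ x ∈ C, (toSet x).Infinite) : IsNowhereDense C := by
  classical
  rw [hC.isNowhereDense_iff, eq_empty_iff_forall_notMem]
  intro x hx
  obtain ⟨J, hJ⟩ := exists_finset_setOf_eqOn_subset isOpen_interior hx
  let y : α → Bool := fun a => if a ∈ J then x a else false
  have hy : y ∈ C := interior_subset (hJ fun a ha => if_pos ha)
  refine hinf y hy (J.finite_toSet.subset fun a ha => ?_)
  by_contra haJ
  simp [toSet, y, Finset.mem_coe.not.mp haJ] at ha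

lemma isMeagre_cantorCopy_eventuallyMeets {K : ℕ → Set α} (hfin : ∀ k, (K k).Finite)
    (hK : ∀ a, ∀ᶠ k in atTop, a ∉ K k) : IsMeagre (cantorCopy (eventuallyMeets K)) := by
  let E : ℕ → Set (α → Bool) := fun j => ⋂ k ≥ j, ⋃ a ∈ K k, {x | x a = true}
  have hmemE {x j} : x ∈ E j ↔ ∀ k ≥ j, (toSet x ∩ K k).Nonempty := by
    simp [E, toSet, Set.Nonempty, and_comm]
  have hcover : cantorCopy (eventuallyMeets K) ⊆ ⋃ j, E j := fun x hx => by
    obtain ⟨j, hj⟩ := eventually_atTop.mp hx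
    exact mem_iUnion.mpr ⟨j, hmemE.mpr hj⟩
  refine (isMeagre_iUnion fun j => IsNowhereDense.isMeagre ?_).mono hcover
  have hclosed : IsClosed (E j) := isClosed_biInter fun k _ =>
    (hfin k).isClosed_biUnion fun a _ => isClosed_eq (continuous_apply a) continuous_const
  refine isNowhereDense_of_forall_infinite hclosed fun x hx hxfin => ?_
  obtain ⟨k, hdisj, hk⟩ :=
    ((hxfin.eventually_all.mpr fun a _ => hK a).and (eventually_ge_atTop j)).exists
  obtain ⟨a, hax, hak⟩ := hmemE.mp hx k hk
  exact hdisj a hax hak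

lemma eventually_notMem_of_pairwise_disjoint {K : ℕ → Set α} (hK : Pairwise (Disjoint on K))
    (a : α) : ∀ᶠ k in atTop, a ∉ K k := by
  by_cases h : ∃ k₀, a ∈ K k₀
  · obtain ⟨k₀, hk₀⟩ := h
    filter_upwards [eventually_gt_atTop k₀] with k hk hak
    exact (hK hk.ne').ne_of_mem hak hk₀ rfl
  · exact Eventually.of_forall fun k hak => h ⟨k, hak⟩

end EventuallyMeets

section Avoiding

variable {α : Type*} {C : Set (α → Bool)}

lemma exists_eqOn_and_finset_avoiding (hC : IsClosed C) (hC' : IsNowhereDense C) (z : α → Bool)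
    (J : Finset α) : ∃ x, EqOn x z J ∧ ∃ J' : Finset α, ∀ y, EqOn y x J' → y ∉ C := by
  have hnot : ¬ {y | EqOn y z J} ⊆ C := fun h => by
    simpa [hC.isNowhereDense_iff.mp hC'] using
      interior_maximal h (isOpen_setOf_eqOn z J) (eqOn_refl z J)
  obtain ⟨x, hxz, hxC⟩ := not_subset.mp hnot
  obtain ⟨J', hJ'⟩ := exists_finset_setOf_eqOn_subset hC.isOpen_compl hxC
  exact ⟨x, hxz, J', fun y hy => hJ' hy⟩

lemma exists_disjoint_finset_avoiding_of_patterns (hC : IsClosed C) (hC' : IsNowhereDense C)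
    (S : Finset α) (P : Finset (S → Bool)) :
    ∃ K : Finset α, Disjoint S K ∧ ∃ t : α → Bool,
      ∀ p ∈ P, ∀ y : α → Bool, (∀ i : S, y i = p i) → EqOn y t K → y ∉ C := by
  classical
  induction P using Finset.induction_on with
  | empty => exact ⟨∅, Finset.disjoint_empty_right S, fun _ => false, by simp⟩
  | insert p P _ ih =>
    obtain ⟨K, hSK, t, ht⟩ := ih
    let z : α → Bool := fun a => if h : a ∈ S then p ⟨a, h⟩ else t a
    obtain ⟨x, hxz, J, hJ⟩ := exists_eqOn_and_finset_avoiding hC hC' z (S ∪ K)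
    refine ⟨K ∪ (J \ S), Finset.disjoint_union_right.mpr ⟨hSK, Finset.disjoint_sdiff⟩, x, ?_⟩
    rintro q hq y hyq hyx
    rcases Finset.mem_insert.mp hq with rfl | hq
    · refine hJ y fun a ha => ?_
      by_cases haS : a ∈ S
      · rw [hyq ⟨a, haS⟩, hxz (Finset.mem_union_left _ haS)]
        simp [z, haS]
      · exact hyx (Finset.mem_union_right _ (Finset.mem_sdiff.mpr ⟨ha, haS⟩))
    · refine ht q hq y hyq fun a ha => ?_
      have haS : a ∉ S := Finset.disjoint_right.mp hSK ha
      rw [hyx (Finset.mem_union_left _ ha), hxz (Finset.mem_union_right _ ha)]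
      exact dif_neg haS

lemma exists_disjoint_finset_avoiding (hC : IsClosed C) (hC' : IsNowhereDense C) (S : Finset α) :
    ∃ K : Finset α, Disjoint S K ∧ ∃ t : α → Bool, ∀ y, EqOn y t K → y ∉ C := by
  classical
  obtain ⟨K, hSK, t, ht⟩ := exists_disjoint_finset_avoiding_of_patterns hC hC' S Finset.univ
  exact ⟨K, hSK, t, fun y => ht (fun i => y i) (Finset.mem_univ _) y fun _ => rfl⟩

end Avoiding

theorem exists_pairwise_disjoint_subset_eventuallyMeets {α : Type*} {H : Set (Set α)}
    (hH : IsUpperSet H) (hm : IsMeagre (cantorCopy H)) :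
    ∃ K : ℕ → Set α, (∀ k, (K k).Finite) ∧ Pairwise (Disjoint on K) ∧ H ⊆ eventuallyMeets K := by
  classical
  obtain ⟨C, hCmono, hCclosed, hCnwd, hCcover⟩ := hm.exists_monotone_isClosed_isNowhereDense
  choose Kf hKf t ht using fun k S => exists_disjoint_finset_avoiding (hCclosed k) (hCnwd k) S
  -- `U k` is the union of the first `k` blocks, and block `k` is chosen disjoint from it.
  let U : ℕ → Finset α := fun k => Nat.rec ∅ (fun k Uk => Uk ∪ Kf k Uk) k
  let K : ℕ → Set α := fun k => Kf k (U k)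
  have hUmono : Monotone U := monotone_nat_of_le_succ fun k => Finset.subset_union_left
  have hKdisj : Pairwise (Disjoint on K) := by
    intro k l hkl
    wlog hlt : k < l generalizing k l
    · exact (this hkl.symm (lt_of_le_of_ne (not_lt.mp hlt) hkl.symm)).symm
    have hKU : Kf k (U k) ⊆ U l := Finset.subset_union_right.trans (hUmono hlt)
    exact Finset.disjoint_coe.mpr ((hKf l (U l)).mono_left hKU)
  refine ⟨K, fun k => (Kf k (U k)).finite_toSet, hKdisj, fun X hX => ?_⟩
  -- `T` follows every avoiding pattern `t k` on its block, so `X ∪ T` can differ from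
  -- `t k` on `K k` only at points of `X`.
  let T : Set α := ⋃ k, {a ∈ K k | t k (U k) a = true}
  have hT {k a} (ha : a ∈ K k) : a ∈ T ↔ t k (U k) a = true := by
    refine ⟨fun haT => ?_, fun h => mem_iUnion.mpr ⟨k, ha, h⟩⟩
    obtain ⟨l, hal, htl⟩ := mem_iUnion.mp haT
    obtain rfl : l = k := by_contra fun hlk => (hKdisj hlk).ne_of_mem hal ha rfl
    exact htl
  let x : α → Bool := fun a => decide (a ∈ X ∪ T)
  have hx : x ∈ cantorCopy H := hH (fun a ha => by simp [x, toSet, ha]) hX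
  obtain ⟨j, hj⟩ := mem_iUnion.mp (hCcover hx)
  filter_upwards [eventually_ge_atTop j] with k hk
  have hxk : ¬ EqOn x (t k (U k)) (K k) := fun h => ht k (U k) x h (hCmono hk hj)
  obtain ⟨a, ha, hne⟩ := by simpa only [EqOn, not_forall, exists_prop] using hxk
  refine ⟨a, by_contra fun haX => hne ?_, ha⟩
  simp [x, haX, hT ha]

/-- If `F` is a non-meager filter on `ω` extending the Fréchet filter, then the family
`G` of all `A ⊆ ω × ω` all of whose vertical sections belong to `F` is non-meager
in `2^(ω×ω)`. -/
theorem stmt9 (F : Set (Set ℕ)) (hF : IsFilterOn F) (hFr : ExtendsFrechet F)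
    (hNM : NonMeagerFamily F) :
    NonMeagerFamily {A : Set (ℕ × ℕ) | ∀ n : ℕ, {x : ℕ | (n, x) ∈ A} ∈ F} := by
  set G := {A : Set (ℕ × ℕ) | ∀ n : ℕ, {x : ℕ | (n, x) ∈ A} ∈ F}
  intro hG
  apply hNM
  obtain ⟨-, -, hF_inter, hF_mono⟩ := hF
  have hG_up : IsUpperSet G := fun A B hAB hA n => hF_mono _ _ (hA n) fun x hx => hAB hx
  obtain ⟨K, hK_fin, hK_disj, hG_K⟩ := exists_pairwise_disjoint_subset_eventuallyMeets hG_up hG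
  let L : ℕ → Set ℕ := fun k => Prod.snd '' (K k ∩ {p | p.1 < p.2})
  have hL_fin (k : ℕ) : (L k).Finite := ((hK_fin k).subset inter_subset_left).image _
  have hL (b : ℕ) : ∀ᶠ k in atTop, b ∉ L k := by
    filter_upwards [(finite_Iio b).eventually_all.mpr fun n _ =>
      eventually_notMem_of_pairwise_disjoint hK_disj (n, b)] with k hk
    rintro ⟨⟨n, b⟩, ⟨hnb, hlt⟩, rfl⟩
    exact hk n hlt hnb
  refine (isMeagre_cantorCopy_eventuallyMeets hL_fin hL).mono fun x hx => ?_
  have hA : {p : ℕ × ℕ | p.2 ∈ toSet x ∧ p.1 < p.2} ∈ G := fun n =>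
    hF_inter _ {b | n < b} hx (hFr _ ((finite_Iic n).subset fun b (hb : ¬ n < b) => not_lt.mp hb))
  filter_upwards [hG_K hA] with k ⟨p, ⟨hpx, hlt⟩, hpK⟩
  exact ⟨p.2, hpx, p, ⟨hpK, hlt⟩, rfl⟩
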